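/- arXiv:1509.07898 — 2 statements merged into one kernel-verified Lean document; each statement's English description precedes it below -/
import Mathlib

section
/- For a natural number m ≥ 0, there exist k ≥ 1 and natural numbers 0 ≤ n_1 ≤ n_2 ≤ ... ≤ n_k such that L_{n_1}·L_{n_2}·...·L_{n_k} − 1 = F_m^2 if and only if 0 ≤ m ≤ 2. -/
/-!
If `F_m ^ 2 + 1` is a product of Lucas numbers and `m ≥ 3`, Catalan's identity writes
`F_m ^ 2 + 1 = F_x * F_r` with `x` odd and `r = m + 1` or `m + 2` odd. Since `F_r` is a sum of two
coprime squares, `-1` is a square modulo `F_r`, so `4 ∤ F_r`; as `F_r > 2`, some odd prime `p`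
divides `F_r` and hence some Lucas number `L_n`. But `L_n ∣ F_{2n}` and `r` is odd, so
`p ∣ gcd (F_r, F_{2n}) = F_{gcd (r, n)} ∣ F_n`, while `gcd (F_n, L_n) ∣ 2` because
`L_n + F_n = 2 F_{n+1}`.
-/

def lucas : ℕ → ℕ
  | 0 => 2
  | 1 => 1
  | n + 2 => lucas (n + 1) + lucas n

open Nat

theorem lucas_add_fib : ∀ n, lucas n + fib n = 2 * fib (n + 1)
  | 0 => rfl
  | 1 => rfl
  | n + 2 => by
    have ih₀ := lucas_add_fib n
    have ih₁ := lucas_add_fib (n + 1)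
    simp only [lucas, fib_add_two] at *
    omega

theorem fib_two_mul_eq_fib_mul_lucas (n : ℕ) : fib (2 * n) = fib n * lucas n := by
  rw [fib_two_mul, ← lucas_add_fib, Nat.add_sub_cancel]

theorem dvd_two_of_dvd_fib_of_dvd_lucas {d n : ℕ} (hf : d ∣ fib n) (hl : d ∣ lucas n) :
    d ∣ 2 := by
  have h : d ∣ 2 * fib (n + 1) := lucas_add_fib n ▸ dvd_add hl hf
  exact (Coprime.coprime_dvd_left hf (fib_coprime_fib_succ n)).dvd_of_dvd_mul_right h

theorem dvd_two_of_dvd_fib_of_dvd_lucas_of_odd {d r n : ℕ} (hr : Odd r) (hf : d ∣ fib r)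
    (hl : d ∣ lucas n) : d ∣ 2 := by
  have h2n : d ∣ fib (2 * n) := fib_two_mul_eq_fib_mul_lucas n ▸ hl.mul_left (fib n)
  have hgcd : d ∣ fib (Nat.gcd r n) := by
    rw [← (coprime_two_left.mpr hr).gcd_mul_left_cancel_right n, fib_gcd]
    exact Nat.dvd_gcd hf h2n
  exact dvd_two_of_dvd_fib_of_dvd_lucas (hgcd.trans (fib_dvd _ _ (Nat.gcd_dvd_right r n))) hl

theorem isSquare_neg_one_zmod_fib_of_odd {r : ℕ} (hr : Odd r) : IsSquare (-1 : ZMod (fib r)) := by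
  obtain ⟨k, rfl⟩ := hr
  exact ZMod.isSquare_neg_one_of_eq_sq_add_sq_of_coprime (fib_two_mul_add_one k)
    (fib_coprime_fib_succ k).symm

theorem not_four_dvd_fib_of_odd {r : ℕ} (hr : Odd r) : ¬ 4 ∣ fib r := fun h4 =>
  absurd (ZMod.isSquare_neg_one_of_dvd h4 (isSquare_neg_one_zmod_fib_of_odd hr)) (by decide)

theorem exists_odd_prime_dvd_fib_of_odd {r : ℕ} (hr : Odd r) (h4 : 4 ≤ r) :
    ∃ p, p.Prime ∧ p ∣ fib r ∧ Odd p := by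
  have h2 : 2 < fib r := (show 2 < fib 4 by decide).trans_le (fib_mono h4)
  exact (four_dvd_or_exists_odd_prime_and_dvd_of_two_lt h2).resolve_left
    (not_four_dvd_fib_of_odd hr)

theorem fib_mul_fib_add_two_mul_of_odd {x : ℕ} (hx : Odd x) (a : ℕ) :
    fib x * fib (x + 2 * a) = fib (x + a) ^ 2 + fib a ^ 2 := by
  have h := Int.fib_add_sq_sub_fib_mul_fib_add_two_mul x a
  rw [Int.natAbs_natCast, hx.neg_one_pow] at h
  zify
  simp only [← Int.fib_natCast]
  push_cast
  linarith

theorem exists_odd_fib_dvd_fib_sq_add_one {m : ℕ} (hm : 3 ≤ m) :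
    ∃ r, Odd r ∧ 4 ≤ r ∧ fib r ∣ fib m ^ 2 + 1 := by
  rcases Nat.even_or_odd m with hm' | hm'
  · obtain ⟨x, rfl⟩ : ∃ x, m = x + 1 := ⟨m - 1, by omega⟩
    have hx : Odd x := by simpa [parity_simps] using hm'
    refine ⟨x + 2 * 1, by simpa [parity_simps] using hx, by omega, Dvd.intro_left (fib x) ?_⟩
    simpa using fib_mul_fib_add_two_mul_of_odd hx 1
  · obtain ⟨x, rfl⟩ : ∃ x, m = x + 2 := ⟨m - 2, by omega⟩
    have hx : Odd x := by simpa [parity_simps] using hm'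
    refine ⟨x + 2 * 2, by simpa [parity_simps] using hx, by omega, Dvd.intro_left (fib x) ?_⟩
    simpa using fib_mul_fib_add_two_mul_of_odd hx 2

theorem lucas_prod_ne_fib_sq_add_one {m : ℕ} (hm : 3 ≤ m) (l : List ℕ) :
    (l.map lucas).prod ≠ fib m ^ 2 + 1 := by
  intro h
  obtain ⟨r, hr, hr4, hdvd⟩ := exists_odd_fib_dvd_fib_sq_add_one hm
  obtain ⟨p, hp, hpr, hpodd⟩ := exists_odd_prime_dvd_fib_of_odd hr hr4
  obtain ⟨_, hmem, hpl⟩ := hp.prime.dvd_prod_iff.mp (h ▸ hpr.trans hdvd)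
  obtain ⟨n, -, rfl⟩ := List.mem_map.mp hmem
  have hp2 : p = 2 :=
    (prime_dvd_prime_iff_eq hp prime_two).mp (dvd_two_of_dvd_fib_of_dvd_lucas_of_odd hr hpr hpl)
  exact not_even_iff_odd.mpr hpodd (hp2 ▸ even_two)

theorem lucas_prod_sub_one_eq_fib_sq_iff (m : ℕ) :
    (∃ l : List ℕ, l ≠ [] ∧ l.Pairwise (· ≤ ·) ∧
        ((l.map lucas).prod : ℤ) - 1 = (Nat.fib m : ℤ) ^ 2) ↔
      m ≤ 2 := by
  constructor
  · rintro ⟨l, -, -, h⟩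
    by_contra! hm
    have h' : ((l.map lucas).prod : ℤ) = fib m ^ 2 + 1 := by linarith
    exact lucas_prod_ne_fib_sq_add_one hm l (by exact_mod_cast h')
  · intro hm
    refine ⟨[if m = 0 then 1 else 0], by simp, List.pairwise_singleton _ _, ?_⟩
    interval_cases m <;> rfl
end

section
/- For a natural number m ≥ 0, there exist k ≥ 1 and natural numbers 0 ≤ n_1 ≤ n_2 ≤ ... ≤ n_k such that L_{n_1}·L_{n_2}·...·L_{n_k} + 1 = L_m^2 if and only if m = 0, m = 2, or m = 4. -/
open scoped goldenRatio

theorem lucas_add_two (n : ℕ) : lucas (n + 2) = lucas (n + 1) + lucas n := rfl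

theorem coe_lucas_eq (n : ℕ) : (lucas n : ℝ) = φ ^ n + ψ ^ n := by
  induction n using Nat.twoStepInduction with
  | zero => norm_num [lucas]
  | one => simp [lucas, Real.goldenRatio_add_goldenConj]
  | more n h₀ h₁ =>
    rw [lucas_add_two, Nat.cast_add, h₀, h₁]
    linear_combination (-φ ^ n) * Real.goldenRatio_sq - ψ ^ n * Real.goldenConj_sq

theorem lucas_two_mul_add (r d : ℕ) :
    (lucas (2 * r + d) : ℤ) = lucas (r + d) * lucas r - (-1) ^ r * lucas d := by
  have h : (lucas (2 * r + d) : ℝ) = lucas (r + d) * lucas r - (-1) ^ r * lucas d := by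
    simp only [coe_lucas_eq, ← Real.goldenRatio_mul_goldenConj]
    generalize φ = x
    generalize ψ = y
    ring
  exact_mod_cast h

theorem lucas_sq_sub_five_mul_fib_sq (n : ℕ) :
    (lucas n : ℤ) ^ 2 - 5 * Nat.fib n ^ 2 = 4 * (-1) ^ n := by
  have h : (lucas n : ℝ) ^ 2 - 5 * Nat.fib n ^ 2 = 4 * (-1) ^ n := by
    rw [coe_lucas_eq, Real.coe_fib_eq, ← Real.goldenRatio_mul_goldenConj]
    generalize φ = x
    generalize ψ = y
    field_simp
    rw [Real.sq_sqrt (by norm_num)]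
    ring
  exact_mod_cast h

theorem lucas_pos (n : ℕ) : 0 < lucas n := by
  induction n using lucas.induct <;> simp only [lucas] <;> omega

theorem lucas_le_lucas {m n : ℕ} (hmn : m ≤ n) (hn : n ≠ 1) : lucas m ≤ lucas n := by
  rcases n with _ | _ | n
  · rw [Nat.le_zero.1 hmn]
  · contradiction
  rcases m with _ | m
  · have := lucas_pos n
    have := lucas_pos (n + 1)
    simp only [lucas]
    omega
  · have hmono : Monotone fun k => lucas (k + 1) :=
      monotone_nat_of_le_succ fun k => by rw [lucas_add_two]; omega
    exact hmono (by omega : m ≤ n + 1)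

theorem lucas_add_one_lt_lucas {t a : ℕ} (ha : 4 ≤ a) (hta : t < a) : lucas t + 1 < lucas a := by
  obtain ⟨b, rfl⟩ : ∃ b, a = b + 2 := ⟨a - 2, by omega⟩
  have h₁ : lucas t ≤ lucas (b + 1) := lucas_le_lucas (by omega) (by omega)
  have h₂ : lucas 2 ≤ lucas b := lucas_le_lucas (by omega) (by omega)
  rw [lucas_add_two]
  simp only [lucas] at h₂
  omega

theorem exists_lucas_modEq_unit_mul {a : ℕ} (ha : 0 < a) (n : ℕ) :
    ∃ t ≤ a, t % 2 = n % 2 ∧ ∃ u : ℤˣ, (lucas n : ℤ) ≡ u * lucas t [ZMOD lucas a] := by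
  induction n using Nat.strong_induction_on with
  | _ n ih =>
  by_cases hna : n ≤ a
  · exact ⟨n, hna, rfl, 1, by simp [Int.ModEq.refl]⟩
  by_cases hn2a : n ≤ 2 * a
  · obtain ⟨r, d, rfl, rfl⟩ : ∃ r d, n = 2 * r + d ∧ a = r + d :=
      ⟨n - a, 2 * a - n, by omega, by omega⟩
    refine ⟨d, by omega, by omega, -(-1) ^ r, Int.modEq_iff_dvd.2 ⟨-lucas r, ?_⟩⟩
    push_cast
    linear_combination -lucas_two_mul_add r d
  · obtain ⟨t, hta, ht, u, hu⟩ := ih (n - 2 * a) (by omega)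
    refine ⟨t, hta, by omega, -(-1) ^ a * u, ?_⟩
    obtain ⟨y, rfl⟩ : ∃ y, n = 2 * a + y := ⟨n - 2 * a, by omega⟩
    have hy : (lucas (2 * a + y) : ℤ) ≡ -(-1) ^ a * lucas y [ZMOD lucas a] :=
      Int.modEq_iff_dvd.2 ⟨-lucas (a + y), by linear_combination -lucas_two_mul_add a y⟩
    rw [Nat.add_sub_cancel_left] at hu
    push_cast
    rw [mul_assoc]
    exact hy.trans (hu.mul_left _)

theorem lucas_not_modEq_unit {a t : ℕ} (ha : 4 ≤ a) (hta : t ≤ a) (ht : t ≠ 1) (u : ℤˣ) :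
    ¬ (lucas t : ℤ) ≡ u [ZMOD lucas a] := by
  intro h
  have hdvd := Int.ModEq.dvd h.symm
  rcases hta.lt_or_eq with hlt | rfl
  · have h₁ := lucas_add_one_lt_lucas ha hlt
    have h₂ : lucas 0 ≤ lucas t := lucas_le_lucas (Nat.zero_le t) ht
    simp only [lucas] at h₂
    rcases Int.units_eq_one_or u with rfl | rfl <;>
    · have := Int.eq_zero_of_abs_lt_dvd hdvd (by rw [abs_lt]; push_cast; omega)
      push_cast at this
      omega
  · have h₄ : lucas 4 ≤ lucas t := lucas_le_lucas ha (by omega)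
    simp only [lucas] at h₄
    refine u.ne_zero (Int.eq_zero_of_abs_lt_dvd (dvd_sub_self_left.1 hdvd) ?_)
    rw [Int.isUnit_iff_abs_eq.1 u.isUnit]
    omega

theorem not_lucas_dvd_lucas_sq_sub_one {a m : ℕ} (ha : 4 ≤ a) (hm : Even m) :
    ¬ (lucas a : ℤ) ∣ lucas m ^ 2 - 1 := by
  intro h
  have hsq : (lucas (2 * m) : ℤ) = lucas m ^ 2 - 2 := by
    simpa [hm.neg_one_pow, lucas, sq] using lucas_two_mul_add m 0
  have h2m : (lucas (2 * m) : ℤ) ≡ -1 [ZMOD lucas a] := by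
    rw [Int.modEq_iff_dvd, hsq, show (-1 : ℤ) - (lucas m ^ 2 - 2) = -(lucas m ^ 2 - 1) by ring]
    exact dvd_neg.2 h
  obtain ⟨t, hta, ht, u, hu⟩ := exists_lucas_modEq_unit_mul (by omega : 0 < a) (2 * m)
  refine lucas_not_modEq_unit ha hta (by omega) (-u) ?_
  calc (lucas t : ℤ) = u * (u * lucas t) := by
        rw [← mul_assoc, ← Units.val_mul, Int.units_mul_self, Units.val_one, one_mul]
    _ ≡ u * -1 [ZMOD lucas a] := (hu.symm.trans h2m).mul_left _
    _ = ((-u : ℤˣ) : ℤ) := by push_cast; ring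

theorem lucas_sq_modEq (n : ℕ) : (lucas n : ℤ) ^ 2 ≡ 4 * (-1) ^ n [ZMOD 5] :=
  (Int.modEq_iff_dvd.2 ⟨Nat.fib n ^ 2, by linear_combination lucas_sq_sub_five_mul_fib_sq n⟩).symm

theorem not_five_dvd_lucas (n : ℕ) : ¬ 5 ∣ lucas n := by
  intro h
  have h₀ : (lucas n : ℤ) ^ 2 ≡ 0 [ZMOD 5] :=
    Int.modEq_zero_iff_dvd.2 (dvd_pow (by exact_mod_cast h) two_ne_zero)
  have := h₀.symm.trans (lucas_sq_modEq n)
  rcases neg_one_pow_eq_or ℤ n with h | h <;> rw [h] at this <;> contradiction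

theorem not_five_dvd_prod_map_lucas (l : List ℕ) : ¬ 5 ∣ (l.map lucas).prod := by
  rw [Nat.prime_five.prime.dvd_prod_iff]
  rintro ⟨_, hn, h⟩
  obtain ⟨n, -, rfl⟩ := List.mem_map.1 hn
  exact not_five_dvd_lucas n h

theorem five_dvd_lucas_sq_sub_one {m : ℕ} (hm : Odd m) : (5 : ℤ) ∣ lucas m ^ 2 - 1 := by
  have := lucas_sq_modEq m
  rw [hm.neg_one_pow] at this
  exact (this.trans (by decide)).symm.dvd

theorem lucas_mem_closure_two_three {n : ℕ} (hn : n ≤ 3) :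
    lucas n ∈ Submonoid.closure {2, 3} := by
  rw [Submonoid.mem_closure_pair]
  interval_cases n
  exacts [⟨1, 0, rfl⟩, ⟨0, 0, rfl⟩, ⟨0, 1, rfl⟩, ⟨2, 0, rfl⟩]

theorem exists_eq_pow_of_dvd_pow_mul_pow {p q d α β : ℕ} (hp : p.Prime) (hq : q.Prime)
    (hd : d ∣ p ^ α * q ^ β) (hqd : ¬ q ∣ d) : ∃ k, d = p ^ k := by
  have hcop : d.Coprime (q ^ β) := ((hq.coprime_iff_not_dvd.2 hqd).symm).pow_right β
  obtain ⟨k, -, rfl⟩ := (Nat.dvd_prime_pow hp).1 (hcop.dvd_of_dvd_mul_right hd)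
  exact ⟨k, rfl⟩

theorem three_pow_add_one_eq_two_pow {b c : ℕ} (h : 3 ^ b + 1 = 2 ^ c) : c = 1 ∨ c = 2 := by
  have h8 : 3 ^ b % 8 = 1 ∨ 3 ^ b % 8 = 3 := by
    rcases Nat.even_or_odd' b with ⟨k, rfl | rfl⟩ <;>
      simp [pow_succ, pow_mul, Nat.mul_mod, Nat.pow_mod]
  have hc : c < 3 := by
    by_contra! hc
    have : 2 ^ 3 ∣ 2 ^ c := pow_dvd_pow 2 hc
    omega
  interval_cases c <;> simp_all

theorem two_pow_add_one_eq_three_pow {b c : ℕ} (h : 2 ^ c + 1 = 3 ^ b) : c = 1 ∨ c = 3 := by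
  -- `3` has order `4` modulo `16` and modulo `5`: if `16 ∣ 2 ^ c` then `4 ∣ b`, so `5 ∣ 2 ^ c`.
  obtain ⟨k, r, hr, rfl⟩ : ∃ k r, r < 4 ∧ b = 4 * k + r :=
    ⟨b / 4, b % 4, Nat.mod_lt _ (by norm_num), (Nat.div_add_mod b 4).symm⟩
  have h16 : 3 ^ (4 * k + r) % 16 = 3 ^ r % 16 := by
    simp [pow_add, pow_mul, Nat.mul_mod, Nat.pow_mod]
  have h5 : 3 ^ (4 * k + r) % 5 = 3 ^ r % 5 := by
    simp [pow_add, pow_mul, Nat.mul_mod, Nat.pow_mod]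
  rw [← h] at h16 h5
  rcases Nat.lt_or_ge c 4 with hc | hc
  · interval_cases c <;> interval_cases r <;> revert h16 <;> norm_num
  · have h16' : 2 ^ 4 ∣ 2 ^ c := pow_dvd_pow 2 hc
    have h5' : ¬ 5 ∣ 2 ^ c := fun h5' => by
      have := Nat.prime_five.dvd_of_dvd_pow h5'
      omega
    interval_cases r <;> omega

theorem eq_of_dvd_two_pow_mul_three_pow_of_succ_dvd {z α β : ℕ} (hz : 0 < z)
    (h : z ∣ 2 ^ α * 3 ^ β) (h' : z + 1 ∣ 2 ^ α * 3 ^ β) :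
    z = 1 ∨ z = 2 ∨ z = 3 ∨ z = 8 := by
  have h₃ : z ∣ 3 ^ β * 2 ^ α := mul_comm (2 ^ α) _ ▸ h
  by_cases h3z : 3 ∣ z
  · obtain ⟨c, hc⟩ := exists_eq_pow_of_dvd_pow_mul_pow Nat.prime_two Nat.prime_three h' (by omega)
    have h2c : 2 ∣ 2 ^ c := dvd_pow_self 2 (by rintro rfl; simp at hc; omega)
    obtain ⟨b, rfl⟩ := exists_eq_pow_of_dvd_pow_mul_pow Nat.prime_three Nat.prime_two h₃ (by omega)
    rcases three_pow_add_one_eq_two_pow hc with rfl | rfl <;> omega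
  · obtain ⟨c, rfl⟩ := exists_eq_pow_of_dvd_pow_mul_pow Nat.prime_two Nat.prime_three h h3z
    rcases Nat.eq_zero_or_pos c with rfl | hc
    · simp
    have h2c : 2 ∣ 2 ^ c := dvd_pow_self 2 hc.ne'
    obtain ⟨b, hb⟩ := exists_eq_pow_of_dvd_pow_mul_pow Nat.prime_three Nat.prime_two
      (mul_comm (2 ^ α) _ ▸ h') (by omega)
    rcases two_pow_add_one_eq_three_pow hb with rfl | rfl <;> simp

theorem sq_eq_two_pow_mul_three_pow_add_one {x α β : ℕ} (h : x ^ 2 = 2 ^ α * 3 ^ β + 1) :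
    x = 2 ∨ x = 3 ∨ x = 5 ∨ x = 7 ∨ x = 17 := by
  have hpos : 0 < 2 ^ α * 3 ^ β := by positivity
  obtain ⟨y, rfl⟩ : ∃ y, x = y + 1 := ⟨x - 1, by rcases x with _ | x <;> simp_all⟩
  have hy : y * (y + 2) = 2 ^ α * 3 ^ β := by linarith
  rcases Nat.even_or_odd y with ⟨z, rfl⟩ | hodd
  · have hz : 0 < z := by rcases z with _ | z <;> simp_all
    have hdvd : z * (z + 1) ∣ 2 ^ α * 3 ^ β := ⟨4, by rw [← hy]; ring⟩
    rcases eq_of_dvd_two_pow_mul_three_pow_of_succ_dvd hz (dvd_of_mul_right_dvd hdvd)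
      (dvd_of_mul_left_dvd hdvd) with rfl | rfl | rfl | rfl <;> simp
  · have hy₂ : ¬ 2 ∣ y := hodd.not_two_dvd_nat
    obtain ⟨i, hi⟩ := exists_eq_pow_of_dvd_pow_mul_pow Nat.prime_three Nat.prime_two
      (mul_comm (2 ^ α) _ ▸ hy ▸ dvd_mul_right y (y + 2)) hy₂
    obtain ⟨j, hj⟩ := exists_eq_pow_of_dvd_pow_mul_pow Nat.prime_three Nat.prime_two
      (mul_comm (2 ^ α) _ ▸ hy ▸ dvd_mul_left (y + 2) y) (by omega)
    have h3j : 3 ∣ 3 ^ j := dvd_pow_self 3 (by rintro rfl; simp at hj)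
    rcases i with _ | i
    · simp only [pow_zero] at hi
      simp [hi]
    · have : 3 ∣ 3 ^ (i + 1) := dvd_pow_self 3 i.succ_ne_zero
      omega

theorem eq_zero_or_two_or_four_of_lucas_eq {m : ℕ}
    (h : lucas m = 2 ∨ lucas m = 3 ∨ lucas m = 5 ∨ lucas m = 7 ∨ lucas m = 17) :
    m = 0 ∨ m = 2 ∨ m = 4 := by
  have hm : m < 6 := by
    by_contra! hm
    have := lucas_le_lucas hm (by omega)
    simp only [lucas] at this
    omega
  interval_cases m <;> simp_all [lucas]

theorem lucas_prod_add_one_eq_lucas_sq_iff (m : ℕ) :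
    (∃ l : List ℕ, l ≠ [] ∧ l.Pairwise (· ≤ ·) ∧
        (l.map lucas).prod + 1 = lucas m ^ 2) ↔
      (m = 0 ∨ m = 2 ∨ m = 4) := by
  constructor
  · rintro ⟨l, -, -, hl⟩
    have hP : (((l.map lucas).prod : ℕ) : ℤ) = lucas m ^ 2 - 1 := by
      rw [eq_sub_iff_add_eq]; exact_mod_cast hl
    rcases Nat.even_or_odd m with hm | hm
    · have hsmall : ∀ n ∈ l, n ≤ 3 := fun n hn => by
        by_contra! h
        refine not_lucas_dvd_lucas_sq_sub_one h hm (hP ▸ Int.natCast_dvd_natCast.2 ?_)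
        exact List.dvd_prod (List.mem_map_of_mem hn)
      have hmem : (l.map lucas).prod ∈ Submonoid.closure {2, 3} := Submonoid.list_prod_mem _
        (by simpa using fun n hn => lucas_mem_closure_two_three (hsmall n hn))
      obtain ⟨α, β, hαβ⟩ := (Submonoid.mem_closure_pair 2 3 _).1 hmem
      exact eq_zero_or_two_or_four_of_lucas_eq (sq_eq_two_pow_mul_three_pow_add_one (hαβ ▸ hl).symm)
    · exact absurd (Int.natCast_dvd_natCast.1 (hP ▸ five_dvd_lucas_sq_sub_one hm))
        (not_five_dvd_prod_map_lucas l)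
  · rintro (rfl | rfl | rfl)
    · exact ⟨[2], by simp, by simp, rfl⟩
    · exact ⟨[0, 3], by simp, by decide, rfl⟩
    · exact ⟨[2, 3, 3], by simp, by decide, rfl⟩
end
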